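/- For every k ∈ ℤ₂, the normalized 2-adic logarithm satisfies (1/4)·log(1 + 4k) ≡ k modulo 2ℤ₂. -/

import Mathlib

/-!
For `‖x‖ ≤ 1/4` the `n`-th term `± xⁿ⁺¹/(n+1)` of the logarithm series has norm at most
`(n+1)·4⁻⁽ⁿ⁺¹⁾`, since dividing by `n+1` costs at most a factor `n+1`. From the second term on this
is at most `1/8`, so by the ultrametric inequality the whole tail lies in `8ℤ₂`, while the first
term is `x = 4k`.
-/

theorem eight_mul_le_four_pow (n : ℕ) : 8 * (n + 2) ≤ 4 ^ (n + 2) := by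
  induction n with
  | zero => norm_num
  | succ n ih => rw [pow_succ]; omega

namespace Padic

variable {p : ℕ} [Fact p.Prime]

theorem norm_natCast_pow_self (n : ℕ) : ‖((p ^ n : ℕ) : ℚ_[p])‖ = ((p : ℝ) ^ n)⁻¹ := by
  rw [Nat.cast_pow, norm_p_pow, zpow_neg, zpow_natCast]

theorem inv_le_norm_natCast {m : ℕ} (hm : m ≠ 0) : (m : ℝ)⁻¹ ≤ ‖(m : ℚ_[p])‖ := by
  have hp : 0 < (p : ℝ) := Nat.cast_pos.mpr (Fact.out : p.Prime).pos
  rw [norm_eq_zpow_neg_valuation (Nat.cast_ne_zero.mpr hm), valuation_natCast, zpow_neg,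
    zpow_natCast, inv_le_inv₀ (Nat.cast_pos.mpr (Nat.pos_of_ne_zero hm)) (by positivity)]
  exact_mod_cast Nat.le_of_dvd (Nat.pos_of_ne_zero hm) pow_padicValNat_dvd

theorem exists_eq_mul_padicInt_of_norm_le {a y : ℚ_[p]} (ha : a ≠ 0) (h : ‖y‖ ≤ ‖a‖) :
    ∃ c : ℤ_[p], y = a * c :=
  ⟨⟨y / a, by rwa [norm_div, div_le_one (norm_pos_iff.mpr ha)]⟩, (mul_div_cancel₀ y ha).symm⟩

noncomputable def logSeriesTerm (x : ℚ_[p]) (n : ℕ) : ℚ_[p] :=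
  (-1) ^ n * x ^ (n + 1) / (n + 1)

theorem logSeriesTerm_zero (x : ℚ_[p]) : logSeriesTerm x 0 = x := by
  simp [logSeriesTerm]

theorem norm_logSeriesTerm_le (x : ℚ_[p]) (n : ℕ) :
    ‖logSeriesTerm x n‖ ≤ (n + 1) * ‖x‖ ^ (n + 1) := by
  have hdenom : ((n + 1 : ℕ) : ℝ)⁻¹ ≤ ‖((n + 1 : ℕ) : ℚ_[p])‖ :=
    inv_le_norm_natCast n.succ_ne_zero
  rw [logSeriesTerm, ← Nat.cast_succ, norm_div, norm_mul, norm_pow, norm_neg, norm_one, one_pow,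
    one_mul, norm_pow, div_le_iff₀ ((inv_pos.mpr (by positivity)).trans_le hdenom)]
  calc ‖x‖ ^ (n + 1) = (n + 1) * ‖x‖ ^ (n + 1) * ((n + 1 : ℕ) : ℝ)⁻¹ := by
        field_simp; push_cast; ring
    _ ≤ (n + 1) * ‖x‖ ^ (n + 1) * ‖((n + 1 : ℕ) : ℚ_[p])‖ := by gcongr

theorem summable_logSeriesTerm {x : ℚ_[p]} (hx : ‖x‖ < 1) : Summable (logSeriesTerm x) := by
  have hgeom : Summable fun n : ℕ => (n : ℝ) * ‖x‖ ^ n := by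
    simpa using summable_pow_mul_geometric_of_norm_lt_one 1 (by rwa [norm_norm])
  refine .of_norm_bounded ?_ (norm_logSeriesTerm_le x)
  exact_mod_cast (summable_nat_add_iff 1).mpr hgeom

theorem norm_logSeriesTerm_succ_le {x : ℚ_[p]} (hx : ‖x‖ ≤ 4⁻¹) (n : ℕ) :
    ‖logSeriesTerm x (n + 1)‖ ≤ 8⁻¹ := by
  have hpow : ((n + 2 : ℕ) : ℝ) * 8 ≤ 4 ^ (n + 2) := by
    exact_mod_cast (mul_comm _ _).trans_le (eight_mul_le_four_pow n)
  calc ‖logSeriesTerm x (n + 1)‖ ≤ ((n + 1 : ℕ) + 1) * ‖x‖ ^ (n + 1 + 1) :=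
        norm_logSeriesTerm_le x (n + 1)
    _ ≤ ((n + 1 : ℕ) + 1) * 4⁻¹ ^ (n + 2) := by gcongr
    _ ≤ 8⁻¹ := by
        rw [inv_pow, ← div_eq_mul_inv, div_le_iff₀ (by positivity)]
        push_cast at hpow ⊢
        linarith

theorem norm_tsum_logSeriesTerm_succ_le {x : ℚ_[p]} (hx : ‖x‖ ≤ 4⁻¹) :
    ‖∑' n, logSeriesTerm x (n + 1)‖ ≤ 8⁻¹ :=
  IsUltrametricDist.norm_tsum_le_of_forall_le (norm_logSeriesTerm_succ_le hx)

end Padic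

/-- For every `k ∈ ℤ₂`, the normalized 2-adic logarithm satisfies
`(1/4)·log(1 + 4k) ≡ k mod 2ℤ₂`; that is, the series `∑_{n≥1} (-1)^{n+1} (4k)ⁿ/n`
converges (in `ℚ₂`) to `4·(k + 2c)` for some `c ∈ ℤ₂`. -/
theorem padic_log_one_add_four_mul (k : ℤ_[2]) :
    ∃ c : ℤ_[2], HasSum
      (fun n : ℕ => (-1 : ℚ_[2]) ^ n * (4 * (k : ℚ_[2])) ^ (n + 1) / (n + 1))
      (4 * ((k : ℚ_[2]) + 2 * (c : ℚ_[2]))) := by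
  have h4 : ‖(4 : ℚ_[2])‖ = 4⁻¹ := by
    convert Padic.norm_natCast_pow_self (p := 2) 2 using 2 <;> norm_num
  have h8 : ‖(8 : ℚ_[2])‖ = 8⁻¹ := by
    convert Padic.norm_natCast_pow_self (p := 2) 3 using 2 <;> norm_num
  have hx : ‖4 * (k : ℚ_[2])‖ ≤ 4⁻¹ := by
    rw [norm_mul, h4]
    exact mul_le_of_le_one_right (by norm_num) k.norm_le_one
  have hs := Padic.summable_logSeriesTerm (hx.trans_lt (by norm_num))
  obtain ⟨c, hc⟩ := Padic.exists_eq_mul_padicInt_of_norm_le (by norm_num)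
    ((Padic.norm_tsum_logSeriesTerm_succ_le hx).trans_eq h8.symm)
  have hsum := hs.hasSum
  rw [hs.tsum_eq_zero_add, Padic.logSeriesTerm_zero, hc] at hsum
  refine ⟨c, ?_⟩
  rw [show 4 * ((k : ℚ_[2]) + 2 * c) = 4 * k + 8 * c by ring]
  exact hsum
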